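/- Let G be a directed graph and suppose all infection rates equal β > 0 and all recovery rates equal δ > 0. If ρ(A_{L(G)} + H) ≤ 1, then λ_max(𝒜) < 0 for every β, δ > 0, where 𝒜 = [[−δI, βC_+], [δC_-ᵀ, βHᵀ − (β+2δ)I]]; i.e., the epidemic threshold is infinite. -/

import Mathlib

/-!
If `𝒜` had an eigenvalue `μ` with `0 ≤ Re μ` and eigenvector `(x, y)`, then `δ ≤ ‖μ + δ‖` and
`β + 2δ ≤ ‖μ + β + 2δ‖`, so the moduli `a = |x|`, `b = |y|` satisfy `δ a ≤ β C₊ b` and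
`(β + 2δ) b ≤ δ C₋ᵀ a + β Hᵀ b`. Substituting the first inequality into the second and using
`C₋ᵀ C₊ = A_{L(G)}ᵀ` gives `((β + 2δ) / β) b ≤ (A_{L(G)} + H)ᵀ b` with `b ≥ 0`, `b ≠ 0`.
For a nonnegative matrix this subinvariance forces `‖Aᵐ‖ ≳ cᵐ`, hence `ρ ≥ c` by Gelfand's
formula; so `ρ(A_{L(G)} + H) ≥ (β + 2δ) / β > 1`. As the spectrum is finite, `λ_max` is attained
and therefore negative.
-/

open Matrix

def IsMetzler {n : Type*} [Fintype n] [DecidableEq n] (M : Matrix n n ℝ) : Prop :=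
  ∀ i j, i ≠ j → 0 ≤ M i j

def IsIrreducibleMatrix {n : Type*} [Fintype n] (M : Matrix n n ℝ) : Prop :=
  ∀ i j : n, Relation.ReflTransGen (fun a b => a ≠ b ∧ M a b ≠ 0) i j

def IsEigOf {n : Type*} [Fintype n] (M : Matrix n n ℝ) (μ : ℂ) : Prop :=
  ∃ v : n → ℂ, v ≠ 0 ∧ M.map (Complex.ofReal) *ᵥ v = μ • v

noncomputable def lamMax {n : Type*} [Fintype n] (M : Matrix n n ℝ) : ℝ :=
  sSup {x : ℝ | ∃ μ : ℂ, IsEigOf M μ ∧ x = μ.re}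

noncomputable def specRad {n : Type*} [Fintype n] (M : Matrix n n ℝ) : ℝ :=
  sSup {x : ℝ | ∃ μ : ℂ, IsEigOf M μ ∧ x = ‖μ‖}

noncomputable def Cplus {V E : Type*} [DecidableEq V] (tgt : E → V) : Matrix V E ℝ :=
  fun i ℓ => if tgt ℓ = i then 1 else 0

noncomputable def Cminus {V E : Type*} [DecidableEq V] (src : E → V) : Matrix V E ℝ :=
  fun i ℓ => if src ℓ = i then 1 else 0

noncomputable def nbMatrix {V E : Type*} [DecidableEq V] (src tgt : E → V) : Matrix E E ℝ :=
  fun ℓ m => if tgt ℓ = src m ∧ tgt m ≠ src ℓ then 1 else 0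

noncomputable def lineAdj {V E : Type*} [DecidableEq V] (src tgt : E → V) : Matrix E E ℝ :=
  fun ℓ m => if tgt ℓ = src m then 1 else 0

section Eigenvalues

variable {n : Type*} [Fintype n] [DecidableEq n]

lemma isEigOf_iff_mem_spectrum (M : Matrix n n ℝ) (μ : ℂ) :
    IsEigOf M μ ↔ μ ∈ spectrum ℂ (M.map Complex.ofReal) := by
  rw [← AlgEquiv.spectrum_eq (Matrix.toLinAlgEquiv' : Matrix n n ℂ ≃ₐ[ℂ] _),
    ← Module.End.hasEigenvalue_iff_mem_spectrum, Module.End.hasEigenvalue_iff]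
  simp only [IsEigOf, Submodule.ne_bot_iff, Module.End.mem_eigenspace_iff,
    Matrix.toLinAlgEquiv'_apply]
  exact exists_congr fun v => and_comm

lemma finite_setOf_isEigOf (M : Matrix n n ℝ) : {μ | IsEigOf M μ}.Finite :=
  (Matrix.finite_spectrum (M.map Complex.ofReal)).subset fun μ hμ =>
    (isEigOf_iff_mem_spectrum M μ).1 hμ

lemma isEigOf_transpose_iff {M : Matrix n n ℝ} {μ : ℂ} : IsEigOf Mᵀ μ ↔ IsEigOf M μ := by
  simp only [isEigOf_iff_mem_spectrum, spectrum.mem_iff, Matrix.isUnit_iff_isUnit_det]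
  rw [← Matrix.det_transpose, Matrix.transpose_sub, Matrix.transpose_map,
    Matrix.transpose_transpose, Matrix.algebraMap_eq_diagonal, Matrix.diagonal_transpose]

lemma specRad_transpose (M : Matrix n n ℝ) : specRad Mᵀ = specRad M := by
  simp only [specRad, isEigOf_transpose_iff]

lemma exists_isEigOf [Nonempty n] (M : Matrix n n ℝ) : ∃ μ, IsEigOf M μ :=
  (spectrum.nonempty_of_isAlgClosed_of_finiteDimensional ℂ (M.map Complex.ofReal)).imp
    fun μ => (isEigOf_iff_mem_spectrum M μ).2

lemma IsEigOf.norm_le_specRad {M : Matrix n n ℝ} {μ : ℂ} (h : IsEigOf M μ) :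
    ‖μ‖ ≤ specRad M :=
  le_csSup (((finite_setOf_isEigOf M).image (‖·‖)).bddAbove.mono (by grind)) ⟨μ, h, rfl⟩

lemma lamMax_lt_of_forall_re_lt [Nonempty n] {M : Matrix n n ℝ} {r : ℝ}
    (h : ∀ μ, IsEigOf M μ → μ.re < r) : lamMax M < r := by
  obtain ⟨μ, hμ⟩ := exists_isEigOf M
  have hfin : {x : ℝ | ∃ μ : ℂ, IsEigOf M μ ∧ x = μ.re}.Finite :=
    ((finite_setOf_isEigOf M).image Complex.re).subset (by grind)
  obtain ⟨ν, hν, hmax⟩ :=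
    Set.Nonempty.csSup_mem (s := {x : ℝ | ∃ μ : ℂ, IsEigOf M μ ∧ x = μ.re}) ⟨μ.re, μ, hμ, rfl⟩ hfin
  rw [lamMax, hmax]
  exact h ν hν

end Eigenvalues

section Nonnegative

open Filter Topology

-- The row-sum operator norm is the one matching the sup norm of `n → ℝ` in `‖A *ᵥ b‖ ≤ ‖A‖ ‖b‖`.
attribute [local instance] Matrix.linftyOpNormedRing Matrix.linftyOpNormedAlgebra

variable {n : Type*} [Fintype n]

lemma mulVec_le_mulVec_of_nonneg {m : Type*} {P : Matrix m n ℝ} (hP : ∀ i j, 0 ≤ P i j)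
    {u w : n → ℝ} (huw : u ≤ w) : P *ᵥ u ≤ P *ᵥ w := fun i =>
  Finset.sum_le_sum fun j _ => mul_le_mul_of_nonneg_left (huw j) (hP i j)

lemma pow_smul_le_pow_mulVec [DecidableEq n] {A : Matrix n n ℝ} (hA : ∀ i j, 0 ≤ A i j)
    {b : n → ℝ} {c : ℝ} (hc : 0 ≤ c) (h : c • b ≤ A *ᵥ b) (m : ℕ) :
    c ^ m • b ≤ (A ^ m) *ᵥ b := by
  induction m with
  | zero => simp
  | succ m ih =>
    calc c ^ (m + 1) • b = c • c ^ m • b := by rw [pow_succ', mul_smul]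
      _ ≤ c • ((A ^ m) *ᵥ b) := smul_le_smul_of_nonneg_left ih hc
      _ = (A ^ m) *ᵥ (c • b) := (mulVec_smul _ _ _).symm
      _ ≤ (A ^ m) *ᵥ (A *ᵥ b) := mulVec_le_mulVec_of_nonneg (pow_apply_nonneg hA m) h
      _ = (A ^ (m + 1)) *ᵥ b := by rw [mulVec_mulVec, pow_succ]

lemma linfty_opNorm_map_ofReal [DecidableEq n] (A : Matrix n n ℝ) :
    ‖A.map Complex.ofReal‖ = ‖A‖ := by
  simp [Matrix.linfty_opNorm_def]

lemma ofReal_le_spectralRadius_of_smul_le_mulVec [DecidableEq n] {A : Matrix n n ℝ}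
    (hA : ∀ i j, 0 ≤ A i j) {b : n → ℝ} (hb : 0 ≤ b) (hb0 : b ≠ 0) {c : ℝ} (hc : 0 ≤ c)
    (h : c • b ≤ A *ᵥ b) :
    ENNReal.ofReal c ≤ spectralRadius ℂ (A.map Complex.ofReal) := by
  obtain ⟨i, hi⟩ : ∃ i, 0 < b i := by
    by_contra! hle
    exact hb0 (funext fun i => (hle i).antisymm (hb i))
  set K := b i / ‖b‖
  have hK : 0 < K := div_pos hi (norm_pos_iff.2 hb0)
  have hpow (m : ℕ) : c ^ m * K ≤ ‖A.map Complex.ofReal ^ m‖ := by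
    rw [show A.map Complex.ofReal ^ m = (A ^ m).map Complex.ofReal from
        (A.map_pow Complex.ofRealHom m).symm, linfty_opNorm_map_ofReal,
      mul_div_assoc', div_le_iff₀ (norm_pos_iff.2 hb0)]
    calc c ^ m * b i ≤ ((A ^ m) *ᵥ b) i := pow_smul_le_pow_mulVec hA hc h m i
      _ ≤ ‖(A ^ m) *ᵥ b‖ := (Real.le_norm_self _).trans (norm_le_pi_norm _ i)
      _ ≤ ‖A ^ m‖ * ‖b‖ := Matrix.linfty_opNorm_mulVec _ _
  have hroot : Tendsto (fun m : ℕ => ENNReal.ofReal (c * K ^ (1 / m : ℝ))) atTop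
      (𝓝 (ENNReal.ofReal c)) := by
    have hK1 : Tendsto (fun m : ℕ => K ^ (1 / m : ℝ)) atTop (𝓝 1) := by
      simpa [Function.comp_def] using ((Real.continuousAt_const_rpow hK.ne').tendsto).comp
        tendsto_one_div_atTop_nhds_zero_nat
    simpa using ENNReal.tendsto_ofReal (hK1.const_mul c)
  refine le_of_tendsto_of_tendsto hroot
    (spectrum.pow_norm_pow_one_div_tendsto_nhds_spectralRadius _) ?_
  filter_upwards [eventually_ne_atTop 0] with m hm
  refine ENNReal.ofReal_le_ofReal ?_
  calc c * K ^ (1 / m : ℝ) = (c ^ m * K) ^ (1 / m : ℝ) := by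
        rw [Real.mul_rpow (by positivity) hK.le, one_div, Real.pow_rpow_inv_natCast hc hm]
    _ ≤ ‖A.map Complex.ofReal ^ m‖ ^ (1 / m : ℝ) :=
        Real.rpow_le_rpow (by positivity) (hpow m) (by positivity)

lemma le_specRad_of_smul_le_mulVec [DecidableEq n] {A : Matrix n n ℝ} (hA : ∀ i j, 0 ≤ A i j)
    {b : n → ℝ} (hb : 0 ≤ b) (hb0 : b ≠ 0) {c : ℝ} (hc : 0 ≤ c) (h : c • b ≤ A *ᵥ b) :
    c ≤ specRad A := by
  have : Nonempty n := (Function.ne_iff.1 hb0).nonempty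
  obtain ⟨z, hz, hz_eq⟩ := spectrum.exists_nnnorm_eq_spectralRadius_of_nonempty
    ((exists_isEigOf A).imp fun μ => (isEigOf_iff_mem_spectrum A μ).1)
  have hcz : ENNReal.ofReal c ≤ ‖z‖₊ :=
    hz_eq ▸ ofReal_le_spectralRadius_of_smul_le_mulVec hA hb hb0 hc h
  calc c ≤ ‖z‖ := by simpa [ENNReal.ofReal_le_iff_le_toReal] using hcz
    _ ≤ specRad A := ((isEigOf_iff_mem_spectrum A z).2 hz).norm_le_specRad

end Nonnegative

lemma le_norm_add_ofReal {μ : ℂ} (hμ : 0 ≤ μ.re) (p : ℝ) : p ≤ ‖μ + p‖ :=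
  calc p ≤ (μ + p).re := by simpa using hμ
    _ ≤ ‖μ + p‖ := Complex.re_le_norm _

lemma norm_map_ofReal_mulVec_le {m n : Type*} [Fintype n] {P : Matrix m n ℝ}
    (hP : ∀ i j, 0 ≤ P i j) (w : n → ℂ) (i : m) :
    ‖(P.map Complex.ofReal *ᵥ w) i‖ ≤ (P *ᵥ fun j => ‖w j‖) i := by
  refine (norm_sum_le _ _).trans (Finset.sum_le_sum fun j _ => ?_)
  change ‖(P i j : ℂ) * w j‖ ≤ P i j * ‖w j‖
  rw [norm_mul, Complex.norm_real, Real.norm_of_nonneg (hP i j)]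

section BlockMatrix

variable {V E : Type*} [Fintype V] [Fintype E] [DecidableEq V] [DecidableEq E]

lemma smul_one_map_ofReal_mulVec (p : ℝ) (w : V → ℂ) :
    (p • (1 : Matrix V V ℝ)).map Complex.ofReal *ᵥ w = (p : ℂ) • w := by
  ext i
  simp [Matrix.smul_one_eq_diagonal, Matrix.mulVec_diagonal]

lemma fromBlocks_mulVec_eq_smul_components {B : Matrix V E ℝ} {C : Matrix E V ℝ}
    {D : Matrix E E ℝ} {p q : ℝ} {μ : ℂ} {v : V ⊕ E → ℂ}
    (hv : (fromBlocks (-(p • 1)) B C (D - q • 1)).map Complex.ofReal *ᵥ v = μ • v) :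
    (∀ i, (μ + p) * v (.inl i) = (B.map Complex.ofReal *ᵥ (v ∘ .inr)) i) ∧
      ∀ ℓ, (μ + q) * v (.inr ℓ) =
        (C.map Complex.ofReal *ᵥ (v ∘ .inl)) ℓ + (D.map Complex.ofReal *ᵥ (v ∘ .inr)) ℓ := by
  rw [fromBlocks_map, fromBlocks_mulVec] at hv
  constructor
  · intro i
    have := congrFun hv (.inl i)
    simp [Matrix.map_neg, Matrix.neg_mulVec, smul_one_map_ofReal_mulVec] at this
    linear_combination -this
  · intro ℓ
    have := congrFun hv (.inr ℓ)
    simp [Matrix.map_sub, Matrix.sub_mulVec, smul_one_map_ofReal_mulVec] at this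
    linear_combination -this

lemma IsEigOf.exists_smul_le_mulVec_of_fromBlocks {B : Matrix V E ℝ} {C : Matrix E V ℝ}
    {D : Matrix E E ℝ} {p q : ℝ} {μ : ℂ} (hμ : IsEigOf (fromBlocks (-(p • 1)) B C (D - q • 1)) μ)
    (hre : 0 ≤ μ.re) (hB : ∀ i j, 0 ≤ B i j) (hC : ∀ i j, 0 ≤ C i j) (hD : ∀ i j, 0 ≤ D i j)
    (hp : 0 < p) :
    ∃ b : E → ℝ, 0 ≤ b ∧ b ≠ 0 ∧ (p * q) • b ≤ (C * B + p • D) *ᵥ b := by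
  obtain ⟨v, hv0, hv⟩ := hμ
  obtain ⟨hx, hy⟩ := fromBlocks_mulVec_eq_smul_components hv
  set a : V → ℝ := fun i => ‖v (.inl i)‖
  set b : E → ℝ := fun ℓ => ‖v (.inr ℓ)‖
  have ha : p • a ≤ B *ᵥ b := fun i =>
    calc p * a i ≤ ‖μ + p‖ * a i := by gcongr; exact le_norm_add_ofReal hre p
      _ = ‖(B.map Complex.ofReal *ᵥ (v ∘ .inr)) i‖ := by rw [← norm_mul, hx]
      _ ≤ (B *ᵥ b) i := norm_map_ofReal_mulVec_le hB _ i
  have hb : q • b ≤ C *ᵥ a + D *ᵥ b := fun ℓ =>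
    calc q * b ℓ ≤ ‖μ + q‖ * b ℓ := by gcongr; exact le_norm_add_ofReal hre q
      _ = ‖(C.map Complex.ofReal *ᵥ (v ∘ .inl)) ℓ + (D.map Complex.ofReal *ᵥ (v ∘ .inr)) ℓ‖ := by
        rw [← norm_mul, hy]
      _ ≤ (C *ᵥ a) ℓ + (D *ᵥ b) ℓ := (norm_add_le _ _).trans (add_le_add
        (norm_map_ofReal_mulVec_le hC _ ℓ) (norm_map_ofReal_mulVec_le hD _ ℓ))
  have hb0 : b ≠ 0 := by
    intro hb0
    have hμp : μ + p ≠ 0 := norm_pos_iff.1 (hp.trans_le (le_norm_add_ofReal hre p))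
    have hy0 : v ∘ .inr = 0 := funext fun ℓ => norm_eq_zero.1 (congrFun hb0 ℓ)
    refine hv0 (funext fun k => ?_)
    rcases k with i | ℓ
    · have hi := hx i
      rw [hy0, mulVec_zero] at hi
      exact (mul_eq_zero.1 hi).resolve_left hμp
    · exact congrFun hy0 ℓ
  refine ⟨b, fun ℓ => norm_nonneg _, hb0, ?_⟩
  calc (p * q) • b = p • q • b := mul_smul p q b
    _ ≤ p • (C *ᵥ a + D *ᵥ b) := smul_le_smul_of_nonneg_left hb hp.le
    _ = C *ᵥ (p • a) + (p • D) *ᵥ b := by rw [smul_add, mulVec_smul, smul_mulVec]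
    _ ≤ C *ᵥ (B *ᵥ b) + (p • D) *ᵥ b := add_le_add_left (mulVec_le_mulVec_of_nonneg hC ha) _
    _ = (C * B + p • D) *ᵥ b := by rw [add_mulVec, mulVec_mulVec]

end BlockMatrix

section IncidenceMatrices

variable {V E : Type*} [DecidableEq V] (src tgt : E → V)

lemma Cplus_nonneg (i : V) (ℓ : E) : 0 ≤ Cplus tgt i ℓ := by
  unfold Cplus; positivity

lemma Cminus_nonneg (i : V) (ℓ : E) : 0 ≤ Cminus src i ℓ := by
  unfold Cminus; positivity

lemma nbMatrix_nonneg (ℓ m : E) : 0 ≤ nbMatrix src tgt ℓ m := by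
  unfold nbMatrix; positivity

lemma lineAdj_nonneg (ℓ m : E) : 0 ≤ lineAdj src tgt ℓ m := by
  unfold lineAdj; positivity

lemma Cminus_transpose_mul_Cplus [Fintype V] :
    (Cminus src)ᵀ * Cplus tgt = (lineAdj src tgt)ᵀ := by
  ext ℓ m
  simp [Cminus, Cplus, lineAdj, Matrix.mul_apply, eq_comm]

end IncidenceMatrices

theorem stmt16 {N Mn : ℕ} (hN : 0 < N) (src tgt : Fin Mn → Fin N)
    (hρ : specRad (lineAdj src tgt + nbMatrix src tgt) ≤ 1) :
    ∀ β δ : ℝ, 0 < β → 0 < δ →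
      lamMax (Matrix.fromBlocks
          (-(δ • (1 : Matrix (Fin N) (Fin N) ℝ))) (β • Cplus tgt)
          (δ • (Cminus src)ᵀ)
          (β • (nbMatrix src tgt)ᵀ -
            (β + 2 * δ) • (1 : Matrix (Fin Mn) (Fin Mn) ℝ))) < 0 := by
  intro β δ hβ hδ
  have : Nonempty (Fin N ⊕ Fin Mn) := ⟨.inl ⟨0, hN⟩⟩
  refine lamMax_lt_of_forall_re_lt fun μ hμ => ?_
  by_contra! hre
  obtain ⟨b, hb, hb0, hle⟩ := hμ.exists_smul_le_mulVec_of_fromBlocks hre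
    (fun i ℓ => smul_nonneg hβ.le (Cplus_nonneg tgt i ℓ))
    (fun ℓ i => smul_nonneg hδ.le (Cminus_nonneg src i ℓ))
    (fun ℓ m => smul_nonneg hβ.le (nbMatrix_nonneg src tgt m ℓ)) hδ
  have hblock : δ • (Cminus src)ᵀ * β • Cplus tgt + δ • β • (nbMatrix src tgt)ᵀ
      = (δ * β) • (lineAdj src tgt + nbMatrix src tgt)ᵀ := by
    rw [Matrix.smul_mul, Matrix.mul_smul, Cminus_transpose_mul_Cplus, smul_smul, smul_smul,
      transpose_add, smul_add]
  have hsub : ((β + 2 * δ) / β) • b ≤ (lineAdj src tgt + nbMatrix src tgt)ᵀ *ᵥ b := by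
    rw [← smul_le_smul_iff_of_pos_left (mul_pos hδ hβ), smul_smul, ← smul_mulVec, ← hblock,
      mul_assoc, mul_div_cancel₀ _ hβ.ne']
    exact hle
  have hc := le_specRad_of_smul_le_mulVec (A := (lineAdj src tgt + nbMatrix src tgt)ᵀ)
    (fun ℓ m => add_nonneg (lineAdj_nonneg src tgt m ℓ) (nbMatrix_nonneg src tgt m ℓ))
    hb hb0 (by positivity) hsub
  rw [specRad_transpose] at hc
  have hc1 : 1 < (β + 2 * δ) / β := by rw [one_lt_div hβ]; linarith
  linarith
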